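/- arXiv:2510.01402 — 3 statements merged into one kernel-verified Lean document; each statement's English description precedes it below -/
import Mathlib

section
/- Let k_λ > 0, k_μ > 0, d_min > 0. Suppose d ≥ d_min, v > 0, and ψ ∈ ℝ satisfy v·cos ψ + k_λ·d·v·sin²ψ + k_μ·d = 0. Then v ≥ k_μ·d_min. -/
/-! On the boundary, `k_μ d = -v cos ψ - k_λ d v sin² ψ ≤ -v cos ψ ≤ v`, and `k_μ d_min ≤ k_μ d`. -/

open Real

lemma le_of_mul_cos_add_nonneg_add_eq_zero {v c e ψ : ℝ} (hv : 0 ≤ v) (hc : 0 ≤ c)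
    (h : v * cos ψ + c + e = 0) : e ≤ v := by
  have hcos : -v ≤ v * cos ψ := by nlinarith [neg_one_le_cos ψ]
  linarith

theorem stmt_1 (kl km dmin d v ψ : ℝ) (hkl : 0 < kl) (hkm : 0 < km)
    (hdmin : 0 < dmin) (hd : dmin ≤ d) (hv : 0 < v)
    (hb : v * Real.cos ψ + kl * d * v * (Real.sin ψ)^2 + km * d = 0) :
    km * dmin ≤ v := by
  have hd_pos : 0 < d := hdmin.trans_le hd
  calc km * dmin ≤ km * d := mul_le_mul_of_nonneg_left hd hkm.le
    _ ≤ v := le_of_mul_cos_add_nonneg_add_eq_zero hv.le (by positivity) hb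
end

section
/- Let k_λ > 0, k_μ > 0, d_min > 0, v_max > 0 with k_μ·d_min ≤ v_max. Suppose d ≥ d_min, 0 < v ≤ v_max, and ψ ∈ ℝ satisfy v·cos ψ + k_λ·d·v·sin²ψ + k_μ·d = 0. Then |sin ψ| ≤ √(1 − (k_μ·d_min/v_max)²). -/
/-!
On the boundary the transverse term `k_λ d v sin² ψ` is nonnegative, so `v cos ψ ≤ -k_μ d`,
i.e. `cos ψ ≤ -k_μ d / v ≤ -k_μ d_min / v_max`. Hence `|cos ψ| ≥ k_μ d_min / v_max`, and
`sin² ψ = 1 - cos² ψ` gives the bound.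
-/

open Real

theorem Real.abs_sin_le_sqrt_of_le_abs_cos {ψ c : ℝ} (hc : 0 ≤ c) (h : c ≤ |cos ψ|) :
    |sin ψ| ≤ √(1 - c ^ 2) := by
  apply Real.abs_le_sqrt
  have hsq : c ^ 2 ≤ |cos ψ| ^ 2 := pow_le_pow_left₀ hc h 2
  rw [sq_abs] at hsq
  linarith [sin_sq ψ]

theorem cos_le_neg_div_of_boundary {kl km d v ψ : ℝ} (hkl : 0 ≤ kl) (hd : 0 ≤ d) (hv : 0 < v)
    (hb : v * cos ψ + kl * d * v * sin ψ ^ 2 + km * d = 0) :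
    cos ψ ≤ -(km * d / v) := by
  have htransverse : 0 ≤ kl * d * v * sin ψ ^ 2 := by positivity
  rw [le_neg, div_le_iff₀ hv]
  linarith

theorem stmt_4_general (kl km dmin vmax d v ψ : ℝ) (hkl : 0 < kl) (hkm : 0 < km)
    (hdmin : 0 < dmin)
    (hd : dmin ≤ d) (hv : 0 < v) (hvle : v ≤ vmax)
    (hb : v * Real.cos ψ + kl * d * v * (Real.sin ψ)^2 + km * d = 0) :
    |Real.sin ψ| ≤ Real.sqrt (1 - (km * dmin / vmax)^2) := by
  have hd0 : 0 ≤ d := hdmin.le.trans hd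
  have hc : 0 ≤ km * dmin / vmax := div_nonneg (by positivity) (hv.le.trans hvle)
  have hcos := cos_le_neg_div_of_boundary hkl.le hd0 hv hb
  have hratio : km * dmin / vmax ≤ km * d / v :=
    div_le_div₀ (by positivity) (mul_le_mul_of_nonneg_left hd hkm.le) hv hvle
  refine abs_sin_le_sqrt_of_le_abs_cos hc ?_
  linarith [neg_abs_le (cos ψ)]

theorem stmt_4 (kl km dmin vmax d v ψ : ℝ) (hkl : 0 < kl) (hkm : 0 < km)
    (hdmin : 0 < dmin) (hvmax : 0 < vmax) (hle : km * dmin ≤ vmax)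
    (hd : dmin ≤ d) (hv : 0 < v) (hvle : v ≤ vmax)
    (hb : v * Real.cos ψ + kl * d * v * (Real.sin ψ)^2 + km * d = 0) :
    |Real.sin ψ| ≤ Real.sqrt (1 - (km * dmin / vmax)^2) :=
  stmt_4_general kl km dmin vmax d v ψ hkl hkm hdmin hd hv hvle hb
end

section
/- Let k_λ, k_μ, d_min, v_max > 0 with k_μ·d_min ≤ v_max. Define c = −k_μ·d_min/v_max. For any d ≥ d_min, 0 < v ≤ v_max, ψ ∈ ℝ satisfying v·cos ψ + k_λ·d·v·sin²ψ + k_μ·d = 0, the line-of-sight components ṽ_x = v·cos ψ and ṽ_y = v·sin ψ satisfy ṽ_x ≤ v·c < 0 and ṽ_y² ≤ v²·(1 − c²). -/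
/-!
On the boundary `v cos ψ = -k_λ d v sin² ψ - k_μ d ≤ -k_μ d_min`, and `v ≤ v_max` turns this
into `cos ψ ≤ c < 0`. Hence `cos² ψ ≥ c²`, which bounds `sin² ψ = 1 - cos² ψ` by `1 - c²`.
-/

open Real

lemma mul_cos_le_neg_of_boundary {kl km d v ψ : ℝ} (hkl : 0 ≤ kl) (hd : 0 ≤ d) (hv : 0 ≤ v)
    (hb : v * cos ψ + kl * d * v * sin ψ ^ 2 + km * d = 0) :
    v * cos ψ ≤ -(km * d) := by
  have : 0 ≤ kl * d * v * sin ψ ^ 2 := by positivity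
  linarith

lemma neg_le_mul_neg_div_of_le {a v w : ℝ} (ha : 0 ≤ a) (hw : 0 < w) (hvw : v ≤ w) :
    -a ≤ v * (-a / w) := by
  rw [mul_div_assoc', le_div_iff₀ hw]
  nlinarith

lemma sq_mul_sin_le_of_cos_le_nonpos {v ψ c : ℝ} (hcos : cos ψ ≤ c) (hc : c ≤ 0) :
    (v * sin ψ) ^ 2 ≤ v ^ 2 * (1 - c ^ 2) := by
  have hsq : c ^ 2 ≤ cos ψ ^ 2 := by nlinarith
  rw [mul_pow, sin_sq]
  gcongr

theorem stmt_12_general (kl km dmin vmax d v ψ : ℝ) (hkl : 0 < kl) (hkm : 0 < km)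
    (hdmin : 0 < dmin) (hvmax : 0 < vmax)
    (hd : dmin ≤ d) (hv : 0 < v) (hvle : v ≤ vmax)
    (hb : v * Real.cos ψ + kl * d * v * (Real.sin ψ)^2 + km * d = 0) :
    v * Real.cos ψ ≤ v * (-(km * dmin) / vmax) ∧
      v * (-(km * dmin) / vmax) < 0 ∧
      (v * Real.sin ψ)^2 ≤ v^2 * (1 - (-(km * dmin) / vmax)^2) := by
  have hc : -(km * dmin) / vmax < 0 :=
    div_neg_of_neg_of_pos (neg_neg_of_pos (mul_pos hkm hdmin)) hvmax
  have hx : v * cos ψ ≤ v * (-(km * dmin) / vmax) :=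
    calc v * cos ψ ≤ -(km * d) :=
          mul_cos_le_neg_of_boundary hkl.le (hdmin.le.trans hd) hv.le hb
      _ ≤ -(km * dmin) := by gcongr
      _ ≤ v * (-(km * dmin) / vmax) :=
          neg_le_mul_neg_div_of_le (by positivity) hvmax hvle
  have hcos : cos ψ ≤ -(km * dmin) / vmax := le_of_mul_le_mul_left hx hv
  exact ⟨hx, mul_neg_of_pos_of_neg hv hc, sq_mul_sin_le_of_cos_le_nonpos hcos hc.le⟩

theorem stmt_12 (kl km dmin vmax d v ψ : ℝ) (hkl : 0 < kl) (hkm : 0 < km)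
    (hdmin : 0 < dmin) (hvmax : 0 < vmax) (hle : km * dmin ≤ vmax)
    (hd : dmin ≤ d) (hv : 0 < v) (hvle : v ≤ vmax)
    (hb : v * Real.cos ψ + kl * d * v * (Real.sin ψ)^2 + km * d = 0) :
    v * Real.cos ψ ≤ v * (-(km * dmin) / vmax) ∧
      v * (-(km * dmin) / vmax) < 0 ∧
      (v * Real.sin ψ)^2 ≤ v^2 * (1 - (-(km * dmin) / vmax)^2) :=
  stmt_12_general kl km dmin vmax d v ψ hkl hkm hdmin hvmax hd hv hvle hb
end
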